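/- arXiv:2601.01047 — 2 statements merged into one kernel-verified Lean document; each statement's English description precedes it below -/
import Mathlib

section
/- Suppose (e_i) is a semi-normalized Schauder basis of a Banach space E which is not equivalent to the unit vector basis of ℓ_1. Then there exists a Banach lattice X and a basic sequence (x_i) in X equivalent to (e_i) such that (x_i) is not an absolute sequence, i.e. there is no constant A such that ‖Σ_{i=1}^m |a_i x_i|‖ ≤ A‖Σ_{i=1}^m a_i x_i‖ for all m and all scalars a_1, …, a_m. -/
open Filter Topology

section Defs

/-- The Mathlib (Dec 2024) class `NormedLatticeAddCommGroup`, removed since; restated verbatim. -/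
class NormedLatticeAddCommGroup (α : Type*) extends NormedAddCommGroup α, Lattice α where
  add_le_add_left : ∀ a b : α, a ≤ b → ∀ c : α, c + a ≤ c + b
  solid : ∀ a b : α, |a| ≤ |b| → ‖a‖ ≤ ‖b‖

/-- The Mathlib (Dec 2024) class `OrderedSMul`, removed since; restated with its old fields. -/
class OrderedSMul (R M : Type*) [Semiring R] [PartialOrder R] [AddCommMonoid M] [PartialOrder M]
    [SMulWithZero R M] : Prop where
  smul_lt_smul_of_pos : ∀ {a b : M} {c : R}, a < b → 0 < c → c • a < c • b
  lt_of_smul_lt_smul_of_pos : ∀ {a b : M} {c : R}, c • a < c • b → 0 < c → a < b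

/-- The closed linear span of a sequence. -/
noncomputable def closedSpanN {E : Type*} [NormedAddCommGroup E] [NormedSpace ℝ E]
    (e : ℕ → E) : Submodule ℝ E :=
  (Submodule.span ℝ (Set.range e)).topologicalClosure

/-- `e` is a basic sequence with coefficient functionals `c`. -/
def IsBasicSeqN {E : Type*} [NormedAddCommGroup E] [NormedSpace ℝ E]
    (e : ℕ → E) (c : E → ℕ → ℝ) : Prop :=
  (∀ n, e n ≠ 0) ∧
  ∀ x ∈ closedSpanN e,
    Tendsto (fun m => ∑ k ∈ Finset.range m, c x k • e k) atTop (𝓝 x) ∧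
    ∀ a : ℕ → ℝ, Tendsto (fun m => ∑ k ∈ Finset.range m, a k • e k) atTop (𝓝 x) → a = c x

def SemiNormalizedN {E : Type*} [NormedAddCommGroup E] (e : ℕ → E) : Prop :=
  ∃ b B : ℝ, 0 < b ∧ ∀ n, b ≤ ‖e n‖ ∧ ‖e n‖ ≤ B

/-- Two sequences are equivalent: `Σ a_i e_i` converges iff `Σ a_i x_i` converges. -/
def EquivSeq {E F : Type*} [NormedAddCommGroup E] [NormedSpace ℝ E]
    [NormedAddCommGroup F] [NormedSpace ℝ F] (e : ℕ → E) (x : ℕ → F) : Prop :=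
  ∀ a : ℕ → ℝ,
    (∃ s, Tendsto (fun m => ∑ i ∈ Finset.range m, a i • e i) atTop (𝓝 s)) ↔
    (∃ t, Tendsto (fun m => ∑ i ∈ Finset.range m, a i • x i) atTop (𝓝 t))

/-- `(x_i)` is an absolute sequence in the Banach lattice `X`. -/
def AbsoluteSeq {X : Type*} [NormedLatticeAddCommGroup X] [NormedSpace ℝ X]
    (x : ℕ → X) : Prop :=
  ∃ A : ℝ, ∀ (m : ℕ) (a : ℕ → ℝ),
    ‖∑ i ∈ Finset.range m, |a i • x i|‖ ≤ A * ‖∑ i ∈ Finset.range m, a i • x i‖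

/-- The witness property for Statement 12: `X` contains a basic sequence equivalent to `(e_i)`
which is not absolute. -/
def Stmt12Witness (E : Type*) [NormedAddCommGroup E] [NormedSpace ℝ E] (e : ℕ → E)
    (X : Type) [NormedLatticeAddCommGroup X] [NormedSpace ℝ X] [OrderedSMul ℝ X]
    [CompleteSpace X] : Prop :=
  ∃ (x : ℕ → X) (c : X → ℕ → ℝ),
    IsBasicSeqN x c ∧ EquivSeq e x ∧ ¬ AbsoluteSeq x

end Defs


namespace Stmt12Proof



/-- Index type for the norming (sup) part: finite rational coefficient patterns. -/
abbrev RIdx : Type := Σ m : ℕ, (Fin m → ℚ)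

/-- Index type for the ℓ¹-blocks: block `m` has coordinates indexed by sign patterns. -/
abbrev BIdx : Type := Σ m : ℕ, (Fin m → Bool)

/-- The full coordinate index set. -/
abbrev Om : Type := RIdx ⊕ BIdx

/-- Index for the "norm components": each sup coordinate, and each block. -/
abbrev Jdx : Type := RIdx ⊕ ℕ

instance : Nonempty Jdx := ⟨Sum.inr 0⟩

/-- The component values whose supremum is the norm. -/
noncomputable def Qv (f : Om → ℝ) : Jdx → ℝ
  | .inl p => |f (.inl p)|
  | .inr m => ∑ ε : Fin m → Bool, |f (.inr ⟨m, ε⟩)|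

lemma Qv_nonneg (f : Om → ℝ) (j : Jdx) : 0 ≤ Qv f j := by
  cases j with
  | inl p => exact abs_nonneg _
  | inr m => exact Finset.sum_nonneg fun _ _ => abs_nonneg _

lemma Qv_le_of_abs_le {f g : Om → ℝ} (h : ∀ ω, |f ω| ≤ |g ω|) (j : Jdx) :
    Qv f j ≤ Qv g j := by
  cases j with
  | inl p => exact h _
  | inr m => exact Finset.sum_le_sum fun ε _ => h _

lemma Qv_le_add_of_abs_le {h f g : Om → ℝ} (hpt : ∀ ω, |h ω| ≤ |f ω| + |g ω|) (j : Jdx) :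
    Qv h j ≤ Qv f j + Qv g j := by
  cases j with
  | inl p => exact hpt _
  | inr m =>
    show (∑ ε : Fin m → Bool, |h (.inr ⟨m, ε⟩)|) ≤
      (∑ ε : Fin m → Bool, |f (.inr ⟨m, ε⟩)|) + (∑ ε : Fin m → Bool, |g (.inr ⟨m, ε⟩)|)
    rw [← Finset.sum_add_distrib]
    exact Finset.sum_le_sum fun ε _ => hpt _

lemma Qv_add_le (f g : Om → ℝ) (j : Jdx) : Qv (f + g) j ≤ Qv f j + Qv g j :=
  Qv_le_add_of_abs_le (fun ω => abs_add_le _ _) j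

lemma Qv_neg (f : Om → ℝ) (j : Jdx) : Qv (-f) j = Qv f j := by
  cases j with
  | inl p => simp [Qv]
  | inr m => simp [Qv]

lemma Qv_smul (r : ℝ) (f : Om → ℝ) (j : Jdx) : Qv (r • f) j = |r| * Qv f j := by
  cases j with
  | inl p => simp [Qv, abs_mul]
  | inr m => simp [Qv, abs_mul, Finset.mul_sum]

lemma abs_apply_le_Qv (f : Om → ℝ) (ω : Om) :
    |f ω| ≤ Qv f (Sum.elim (fun p => Sum.inl p) (fun q => Sum.inr q.1) ω) := by
  cases ω with
  | inl p => exact le_refl _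
  | inr q =>
    obtain ⟨m, ε⟩ := q
    exact Finset.single_le_sum (f := fun ε' => |f (Sum.inr ⟨m, ε'⟩)|)
      (fun _ _ => abs_nonneg _) (Finset.mem_univ ε)

/-- Membership predicate: all norm components bounded. -/
def MemX (f : Om → ℝ) : Prop := ∃ Cb : ℝ, ∀ j, Qv f j ≤ Cb

/-- The submodule of admissible coordinate functions. -/
noncomputable def XS : Submodule ℝ (Om → ℝ) where
  carrier := {f | MemX f}
  add_mem' := by
    rintro f g ⟨Cf, hf⟩ ⟨Cg, hg⟩
    exact ⟨Cf + Cg, fun j => (Qv_add_le f g j).trans (add_le_add (hf j) (hg j))⟩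
  zero_mem' := ⟨0, fun j => by
    cases j with
    | inl p => simp [Qv]
    | inr m => simp [Qv]⟩
  smul_mem' := by
    rintro r f ⟨Cf, hf⟩
    exact ⟨|r| * Cf, fun j => by
      rw [Qv_smul]
      exact mul_le_mul_of_nonneg_left (hf j) (abs_nonneg r)⟩

/-- The Banach lattice. -/
def Xsp : Type := {f : Om → ℝ // MemX f}

namespace Xsp

noncomputable instance : AddCommGroup Xsp := inferInstanceAs (AddCommGroup ↥XS)
noncomputable instance : Module ℝ Xsp := inferInstanceAs (Module ℝ ↥XS)

/-- Coordinates of an element. -/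
def xv (f : Xsp) : Om → ℝ := Subtype.val f

lemma memX (f : Xsp) : MemX (xv f) := f.2

@[simp] lemma xv_add (f g : Xsp) : xv (f + g) = xv f + xv g := rfl
@[simp] lemma xv_neg (f : Xsp) : xv (-f) = -(xv f) := rfl
@[simp] lemma xv_sub (f g : Xsp) : xv (f - g) = xv f - xv g := rfl
@[simp] lemma xv_zero : xv (0 : Xsp) = 0 := rfl
@[simp] lemma xv_smul (r : ℝ) (f : Xsp) : xv (r • f) = r • (xv f) := rfl

lemma ext' {f g : Xsp} (h : xv f = xv g) : f = g := Subtype.ext h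

/-- Evaluation at a coordinate as an additive monoid hom. -/
def evalHom (ω : Om) : Xsp →+ ℝ where
  toFun f := xv f ω
  map_zero' := rfl
  map_add' _ _ := rfl

lemma xv_sum {ι : Type*} (s : Finset ι) (F : ι → Xsp) (ω : Om) :
    xv (∑ i ∈ s, F i) ω = ∑ i ∈ s, xv (F i) ω :=
  map_sum (evalHom ω) F s

noncomputable instance : PartialOrder Xsp := PartialOrder.lift xv fun _ _ h => ext' h

lemma le_def {f g : Xsp} : f ≤ g ↔ ∀ ω, xv f ω ≤ xv g ω := Iff.rfl

lemma lat_mem (f g : Xsp) (h : Om → ℝ) (hpt : ∀ ω, |h ω| ≤ |xv f ω| + |xv g ω|) :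
    MemX h := by
  obtain ⟨Cf, hf⟩ := f.2
  obtain ⟨Cg, hg⟩ := g.2
  exact ⟨Cf + Cg, fun j => (Qv_le_add_of_abs_le hpt j).trans (add_le_add (hf j) (hg j))⟩

lemma abs_max_le (a b : ℝ) : |max a b| ≤ |a| + |b| := by
  rcases le_total a b with h | h
  · rw [max_eq_right h]; exact le_add_of_nonneg_left (abs_nonneg _)
  · rw [max_eq_left h]; exact le_add_of_nonneg_right (abs_nonneg _)

lemma abs_min_le (a b : ℝ) : |min a b| ≤ |a| + |b| := by
  rcases le_total a b with h | h
  · rw [min_eq_left h]; exact le_add_of_nonneg_right (abs_nonneg _)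
  · rw [min_eq_right h]; exact le_add_of_nonneg_left (abs_nonneg _)

noncomputable instance : Lattice Xsp :=
  { (inferInstance : PartialOrder Xsp) with
    sup := fun f g => ⟨fun ω => max (xv f ω) (xv g ω),
      lat_mem f g _ fun ω => abs_max_le _ _⟩
    le_sup_left := fun f g => fun ω => le_max_left _ _
    le_sup_right := fun f g => fun ω => le_max_right _ _
    sup_le := fun f g h hf hg => fun ω => max_le (hf ω) (hg ω)
    inf := fun f g => ⟨fun ω => min (xv f ω) (xv g ω),
      lat_mem f g _ fun ω => abs_min_le _ _⟩
    inf_le_left := fun f g => fun ω => min_le_left _ _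
    inf_le_right := fun f g => fun ω => min_le_right _ _
    le_inf := fun f g h hf hg => fun ω => le_min (hf ω) (hg ω) }

@[simp] lemma xv_sup (f g : Xsp) (ω : Om) : xv (f ⊔ g) ω = max (xv f ω) (xv g ω) := rfl
@[simp] lemma xv_inf (f g : Xsp) (ω : Om) : xv (f ⊓ g) ω = min (xv f ω) (xv g ω) := rfl

lemma xv_abs (f : Xsp) (ω : Om) : xv |f| ω = |xv f ω| := by
  have : |f| = f ⊔ (-f) := rfl
  rw [this, xv_sup, xv_neg]
  exact (abs_eq_max_neg (a := xv f ω)).symm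

/-- The candidate norm. -/
noncomputable def xnorm (f : Xsp) : ℝ := ⨆ j, Qv (xv f) j

lemma bddQ (f : Xsp) : BddAbove (Set.range fun j => Qv (xv f) j) := by
  obtain ⟨C, hC⟩ := f.2
  exact ⟨C, by rintro r ⟨j, rfl⟩; exact hC j⟩

lemma Qv_le_xnorm (f : Xsp) (j : Jdx) : Qv (xv f) j ≤ xnorm f := le_ciSup (bddQ f) j

lemma xnorm_le {f : Xsp} {C : ℝ} (h : ∀ j, Qv (xv f) j ≤ C) : xnorm f ≤ C := ciSup_le h

lemma Qv_zero (j : Jdx) : Qv (0 : Om → ℝ) j = 0 := by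
  cases j with
  | inl p => simp [Qv]
  | inr m => simp [Qv]

lemma xnorm_zero : xnorm (0 : Xsp) = 0 := by
  refine le_antisymm (xnorm_le fun j => ?_) ?_
  · rw [xv_zero, Qv_zero]
  · exact (Qv_nonneg _ (Sum.inr 0)).trans (Qv_le_xnorm 0 _)

/-- The norm. -/
noncomputable instance : NormedAddCommGroup Xsp :=
  AddGroupNorm.toNormedAddCommGroup
  { toFun := xnorm
    map_zero' := xnorm_zero
    add_le' := fun f g => xnorm_le fun j => by
      rw [xv_add]
      exact (Qv_add_le _ _ j).trans (add_le_add (Qv_le_xnorm f j) (Qv_le_xnorm g j))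
    neg' := fun f => by
      show xnorm (-f) = xnorm f
      unfold xnorm
      rw [xv_neg]
      exact congrArg _ (funext fun j => Qv_neg _ j)
    eq_zero_of_map_eq_zero' := fun f hf => by
      refine ext' (funext fun ω => ?_)
      have h1 : |xv f ω| ≤ 0 := by
        refine le_trans (abs_apply_le_Qv _ _) ?_
        refine le_trans (Qv_le_xnorm f _) (le_of_eq hf)
      rw [xv_zero]
      exact abs_eq_zero.mp (le_antisymm h1 (abs_nonneg _)) }

lemma norm_def (f : Xsp) : ‖f‖ = ⨆ j, Qv (xv f) j := rfl

lemma Qv_le_norm (f : Xsp) (j : Jdx) : Qv (xv f) j ≤ ‖f‖ := Qv_le_xnorm f j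

lemma norm_le' {f : Xsp} {C : ℝ} (h : ∀ j, Qv (xv f) j ≤ C) : ‖f‖ ≤ C := xnorm_le h

lemma abs_apply_le_norm (f : Xsp) (ω : Om) : |xv f ω| ≤ ‖f‖ :=
  (abs_apply_le_Qv _ _).trans (Qv_le_norm f _)

noncomputable instance : NormedSpace ℝ Xsp where
  norm_smul_le r f := by
    refine norm_le' fun j => ?_
    rw [xv_smul, Qv_smul]
    exact mul_le_mul_of_nonneg_left (Qv_le_norm f j) (abs_nonneg r)

noncomputable instance : HasSolidNorm Xsp := ⟨by
  intro f g h
  refine norm_le' fun j => le_trans (Qv_le_of_abs_le (fun ω => ?_) j) (Qv_le_norm g j)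
  have h1 := h ω
  rw [xv_abs, xv_abs] at h1
  calc |xv f ω| = |(|xv f ω|)| := (abs_abs _).symm
  _ ≤ |(|xv g ω|)| := by
      rw [abs_of_nonneg (abs_nonneg (xv f ω)), abs_of_nonneg (abs_nonneg (xv g ω))]
      exact h1
  _ = |xv g ω| := abs_abs _⟩

noncomputable instance : NormedLatticeAddCommGroup Xsp :=
  { add_le_add_left := fun _ _ h c => fun ω => by
      rw [xv_add, xv_add]
      exact add_le_add_right (h ω) _
    solid := fun _ _ h => HasSolidNorm.solid h }

noncomputable instance : OrderedSMul ℝ Xsp := by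
  refine OrderedSMul.mk ?_ ?_
  · intro a b r hab hr
    rw [lt_iff_le_and_ne] at hab ⊢
    refine ⟨fun ω => ?_, fun hcon => hab.2 ?_⟩
    · rw [xv_smul]
      exact mul_le_mul_of_nonneg_left (hab.1 ω) (le_of_lt hr)
    · refine ext' (funext fun ω => ?_)
      have := congrArg (fun z => xv z ω) hcon
      simp only [xv_smul, Pi.smul_apply, smul_eq_mul] at this
      exact mul_left_cancel₀ (ne_of_gt hr) this
  · intro a b r h hr
    rw [lt_iff_le_and_ne] at h ⊢
    refine ⟨fun ω => ?_, fun hcon => h.2 (by rw [hcon])⟩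
    have h1 := h.1 ω
    rw [xv_smul, xv_smul] at h1
    simp only [Pi.smul_apply, smul_eq_mul] at h1
    exact le_of_mul_le_mul_left h1 hr

lemma Qv_tendsto {F : ℕ → Om → ℝ} {G : Om → ℝ}
    (h : ∀ ω, Tendsto (fun n => F n ω) atTop (𝓝 (G ω))) (j : Jdx) :
    Tendsto (fun n => Qv (F n) j) atTop (𝓝 (Qv G j)) := by
  cases j with
  | inl p => exact (h _).abs
  | inr m =>
    have : ∀ n, Qv (F n) (Sum.inr m) = ∑ ε : Fin m → Bool, |F n (.inr ⟨m, ε⟩)| := fun n => rfl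
    simp only [this]
    show Tendsto _ atTop (𝓝 (∑ ε : Fin m → Bool, |G (.inr ⟨m, ε⟩)|))
    exact tendsto_finset_sum _ fun ε _ => (h _).abs

lemma dist_coord_le (f g : Xsp) (ω : Om) : |xv f ω - xv g ω| ≤ dist f g := by
  rw [dist_eq_norm]
  exact le_trans (le_of_eq (by rw [xv_sub]; rfl)) (abs_apply_le_norm (f - g) ω)

noncomputable instance : CompleteSpace Xsp := Metric.complete_of_cauchySeq_tendsto (by
  intro u hu
  have hcoord : ∀ ω, CauchySeq (fun n => xv (u n) ω) := by
    intro ω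
    rw [Metric.cauchySeq_iff]
    intro ε hε
    obtain ⟨N, hN⟩ := Metric.cauchySeq_iff.mp hu ε hε
    refine ⟨N, fun m hm n hn => ?_⟩
    have := dist_coord_le (u m) (u n) ω
    rw [Real.dist_eq]
    exact lt_of_le_of_lt this (hN m hm n hn)
  have hex : ∀ ω, ∃ l, Tendsto (fun n => xv (u n) ω) atTop (𝓝 l) :=
    fun ω => cauchySeq_tendsto_of_complete (hcoord ω)
  choose L hL using hex
  obtain ⟨R, hR0, hR⟩ := cauchySeq_bdd hu
  have memL : MemX L := by
    refine ⟨‖u 0‖ + R, fun j => ?_⟩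
    refine le_of_tendsto (Qv_tendsto hL j) (Eventually.of_forall fun n => ?_)
    have h1 : Qv (xv (u n)) j ≤ ‖u n‖ := Qv_le_norm (u n) j
    have h2 : ‖u n‖ ≤ ‖u 0‖ + dist (u n) (u 0) := by
      rw [dist_eq_norm]
      calc ‖u n‖ = ‖u 0 + (u n - u 0)‖ := by rw [add_sub_cancel]
      _ ≤ ‖u 0‖ + ‖u n - u 0‖ := norm_add_le _ _
    exact h1.trans (h2.trans (add_le_add_right (le_of_lt (hR n 0)) _))
  refine ⟨⟨L, memL⟩, ?_⟩
  refine Metric.tendsto_atTop.mpr ?_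
  intro ε hε
  obtain ⟨N, hN⟩ := Metric.cauchySeq_iff.mp hu (ε/2) (by linarith)
  refine ⟨N, fun n hn => ?_⟩
  have key : dist (u n) (⟨L, memL⟩ : Xsp) ≤ ε/2 := by
    refine (le_of_eq (dist_eq_norm (u n) (⟨L, memL⟩ : Xsp))).trans ?_
    refine norm_le' fun j => ?_
    have hpt : ∀ ω, Tendsto (fun k => xv (u n) ω - xv (u k) ω) atTop
        (𝓝 (xv (u n - ⟨L, memL⟩) ω)) := by
      intro ω
      have : xv (u n - ⟨L, memL⟩) ω = xv (u n) ω - L ω := rfl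
      rw [this]
      exact tendsto_const_nhds.sub (hL ω)
    refine le_of_tendsto (Qv_tendsto hpt j) ?_
    filter_upwards [eventually_ge_atTop N] with k hk
    have : (fun ω => xv (u n) ω - xv (u k) ω) = xv (u n - u k) := by
      funext ω; rw [xv_sub]; rfl
    rw [this]
    calc Qv (xv (u n - u k)) j ≤ ‖u n - u k‖ := Qv_le_norm _ j
    _ = dist (u n) (u k) := (dist_eq_norm _ _).symm
    _ ≤ ε/2 := le_of_lt (hN n hn k hk)
  linarith)

end Xsp


section BasisConst

variable {E : Type*} [NormedAddCommGroup E] [NormedSpace ℝ E] [CompleteSpace E]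

/-- The space of sequences of partial sums along `e` which converge. -/
noncomputable def SSmod (e : ℕ → E) : Submodule ℝ (BoundedContinuousFunction ℕ E) where
  carrier := {F | (∃ aa : ℕ → ℝ, ∀ m, F m = ∑ k ∈ Finset.range m, aa k • e k) ∧
    ∃ v, Tendsto (fun m => F m) atTop (𝓝 v)}
  add_mem' := by
    rintro F G ⟨⟨af, haf⟩, ⟨vf, hvf⟩⟩ ⟨⟨ag, hag⟩, ⟨vg, hvg⟩⟩
    constructor
    · refine ⟨af + ag, fun m => ?_⟩
      simp only [BoundedContinuousFunction.add_apply, haf, hag, Pi.add_apply, add_smul,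
        Finset.sum_add_distrib]
    · exact ⟨vf + vg, by simpa using hvf.add hvg⟩
  zero_mem' := by
    constructor
    · exact ⟨0, fun m => by simp⟩
    · exact ⟨0, by simpa using tendsto_const_nhds⟩
  smul_mem' := by
    rintro r F ⟨⟨af, haf⟩, ⟨vf, hvf⟩⟩
    constructor
    · refine ⟨fun k => r * af k, fun m => ?_⟩
      have h1 : (r • F) m = r • (F m) := rfl
      rw [h1, haf, Finset.smul_sum]
      exact Finset.sum_congr rfl fun k _ => smul_smul r (af k) (e k)
    · refine ⟨r • vf, ?_⟩
      have : ∀ m, (r • F) m = r • (F m) := fun m => rfl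
      simp only [this]
      exact hvf.const_smul r

variable (e : ℕ → E)

lemma SSmod_mem_iff (F : BoundedContinuousFunction ℕ E) :
    F ∈ SSmod e ↔ (∃ aa : ℕ → ℝ, ∀ m, F m = ∑ k ∈ Finset.range m, aa k • e k) ∧
      ∃ v, Tendsto (fun m => F m) atTop (𝓝 v) := Iff.rfl

/-- The limit map. -/
noncomputable def PhiFun (F : ↥(SSmod e)) : E := Classical.choose F.2.2

lemma Phi_tendsto (F : ↥(SSmod e)) :
    Tendsto (fun m => (F : BoundedContinuousFunction ℕ E) m) atTop (𝓝 (PhiFun e F)) :=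
  Classical.choose_spec F.2.2

/-- The limit map as a continuous linear map. -/
noncomputable def Phi : ↥(SSmod e) →L[ℝ] E :=
  LinearMap.mkContinuous
    { toFun := PhiFun e
      map_add' := fun F G => by
        refine tendsto_nhds_unique (Phi_tendsto e (F + G)) ?_
        have heq : (fun m => ((F + G : ↥(SSmod e)) : BoundedContinuousFunction ℕ E) m)
            = fun m => (F : BoundedContinuousFunction ℕ E) m
              + (G : BoundedContinuousFunction ℕ E) m := by
          funext m; rfl
        rw [heq]
        exact (Phi_tendsto e F).add (Phi_tendsto e G)
      map_smul' := fun r F => by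
        refine tendsto_nhds_unique (Phi_tendsto e (r • F)) ?_
        have heq : (fun m => ((r • F : ↥(SSmod e)) : BoundedContinuousFunction ℕ E) m)
            = fun m => r • (F : BoundedContinuousFunction ℕ E) m := by
          funext m; rfl
        rw [heq]
        exact (Phi_tendsto e F).const_smul r }
    1 (fun F => by
      rw [one_mul]
      refine le_of_tendsto (Phi_tendsto e F).norm (Eventually.of_forall fun m => ?_)
      exact ((F : BoundedContinuousFunction ℕ E).norm_coe_le_norm m).trans (le_of_eq rfl))

lemma Phi_apply (F : ↥(SSmod e)) : Phi e F = PhiFun e F := rfl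

lemma tendsto_apply_of_tendsto {G : ℕ → BoundedContinuousFunction ℕ E}
    {F : BoundedContinuousFunction ℕ E} (hGF : Tendsto G atTop (𝓝 F)) (m : ℕ) :
    Tendsto (fun n => G n m) atTop (𝓝 (F m)) := by
  rw [tendsto_iff_dist_tendsto_zero]
  refine squeeze_zero (fun n => dist_nonneg) (fun n => BoundedContinuousFunction.dist_coe_le_dist m) ?_
  rwa [← tendsto_iff_dist_tendsto_zero]

lemma isClosed_SSmod {bb : ℝ} (hb : 0 < bb) (hlow : ∀ n, bb ≤ ‖e n‖) :
    IsClosed ((SSmod e : Submodule ℝ (BoundedContinuousFunction ℕ E)) :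
      Set (BoundedContinuousFunction ℕ E)) := by
  refine isClosed_of_closure_subset fun F hF => ?_
  obtain ⟨G, hG, hGF⟩ := mem_closure_iff_seq_limit.mp hF
  choose aa haa using fun n => (hG n).1
  have hcauchyG : CauchySeq G := hGF.cauchySeq
  have happly := tendsto_apply_of_tendsto (E := E) hGF
  -- coefficientwise Cauchy
  have hdiff : ∀ n k, (aa n k) • e k = G n (k+1) - G n k := by
    intro n k
    rw [haa n (k+1), haa n k, Finset.sum_range_succ]
    abel
  have hcoord : ∀ k, CauchySeq (fun n => aa n k) := by
    intro k
    rw [Metric.cauchySeq_iff]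
    intro ε hε
    have hεb : 0 < ε * bb / 2 := by positivity
    obtain ⟨N, hN⟩ := Metric.cauchySeq_iff.mp hcauchyG (ε * bb / 2) hεb
    refine ⟨N, fun n hn l hl => ?_⟩
    have key : |aa n k - aa l k| * ‖e k‖ ≤ 2 * dist (G n) (G l) := by
      have h1 : (aa n k - aa l k) • e k = (G n (k+1) - G l (k+1)) - (G n k - G l k) := by
        rw [sub_smul, hdiff, hdiff]; abel
      have h2 : ‖(aa n k - aa l k) • e k‖ = |aa n k - aa l k| * ‖e k‖ := by
        rw [norm_smul, Real.norm_eq_abs]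
      rw [← h2, h1]
      have h3 : ‖G n (k+1) - G l (k+1)‖ ≤ dist (G n) (G l) := by
        rw [← dist_eq_norm]
        exact BoundedContinuousFunction.dist_coe_le_dist _
      have h4 : ‖G n k - G l k‖ ≤ dist (G n) (G l) := by
        rw [← dist_eq_norm]
        exact BoundedContinuousFunction.dist_coe_le_dist _
      calc ‖(G n (k+1) - G l (k+1)) - (G n k - G l k)‖
          ≤ ‖G n (k+1) - G l (k+1)‖ + ‖G n k - G l k‖ := norm_sub_le _ _
      _ ≤ 2 * dist (G n) (G l) := by linarith
    have hek : bb ≤ ‖e k‖ := hlow k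
    have h5 : |aa n k - aa l k| * bb ≤ 2 * dist (G n) (G l) :=
      le_trans (mul_le_mul_of_nonneg_left hek (abs_nonneg _)) key
    have h6 : 2 * dist (G n) (G l) < 2 * (ε * bb / 2) := by
      have := hN n hn l hl
      linarith
    rw [Real.dist_eq]
    have : |aa n k - aa l k| * bb < ε * bb := by linarith
    exact lt_of_mul_lt_mul_right (by linarith) (le_of_lt hb)
  choose b hbk using fun k => cauchySeq_tendsto_of_complete (hcoord k)
  constructor
  · -- partial-sum form
    refine ⟨b, fun m => ?_⟩
    refine tendsto_nhds_unique (happly m) ?_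
    have : ∀ n, G n m = ∑ k ∈ Finset.range m, aa n k • e k := fun n => haa n m
    simp only [this]
    exact tendsto_finset_sum _ fun k _ => (hbk k).smul_const (e k)
  · -- convergence of partial sums of F
    have hcauchyF : CauchySeq (fun m => F m) := by
      rw [Metric.cauchySeq_iff]
      intro ε hε
      obtain ⟨n₀, hn₀⟩ : ∃ n₀, dist (G n₀) F < ε / 3 := by
        have := (Metric.tendsto_atTop.mp hGF) (ε/3) (by linarith)
        obtain ⟨N, hN⟩ := this
        exact ⟨N, hN N le_rfl⟩
      obtain ⟨v₀, hv₀⟩ := (hG n₀).2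
      obtain ⟨N, hN⟩ := Metric.cauchySeq_iff.mp hv₀.cauchySeq (ε/3) (by linarith)
      refine ⟨N, fun m hm m' hm' => ?_⟩
      have d1 : dist (F m) (G n₀ m) ≤ ε/3 :=
        le_trans (BoundedContinuousFunction.dist_coe_le_dist m) (by rw [dist_comm]; linarith)
      have d2 : dist (G n₀ m) (G n₀ m') < ε/3 := hN m hm m' hm'
      have d3 : dist (G n₀ m') (F m') ≤ ε/3 :=
        le_trans (BoundedContinuousFunction.dist_coe_le_dist m') (by linarith)
      calc dist (F m) (F m') ≤ dist (F m) (G n₀ m) + dist (G n₀ m) (F m') := dist_triangle _ _ _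
      _ ≤ dist (F m) (G n₀ m) + (dist (G n₀ m) (G n₀ m') + dist (G n₀ m') (F m')) :=
          add_le_add_right (dist_triangle _ _ _) _
      _ < ε := by linarith
    exact cauchySeq_tendsto_of_complete hcauchyF

end BasisConst


section BasisBound
variable {E : Type*} [NormedAddCommGroup E] [NormedSpace ℝ E] [CompleteSpace E]
variable (e : ℕ → E) (c : E → ℕ → ℝ)

omit [CompleteSpace E] in
lemma mem_top_span (hfull : closedSpanN e = ⊤) (v : E) : v ∈ closedSpanN e := by
  rw [hfull]; trivial

lemma basis_bound (hbasis : IsBasicSeqN e c) (hfull : closedSpanN e = ⊤)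
    {bb : ℝ} (hb : 0 < bb) (hlow : ∀ n, bb ≤ ‖e n‖) :
    ∃ C : ℝ, 1 ≤ C ∧ ∀ (v : E) (m : ℕ), ‖∑ k ∈ Finset.range m, c v k • e k‖ ≤ C * ‖v‖ := by
  have hexp : ∀ v : E, Tendsto (fun m => ∑ k ∈ Finset.range m, c v k • e k) atTop (𝓝 v) :=
    fun v => (hbasis.2 v (mem_top_span e hfull v)).1
  have huniq : ∀ (v : E) (a : ℕ → ℝ),
      Tendsto (fun m => ∑ k ∈ Finset.range m, a k • e k) atTop (𝓝 v) → a = c v :=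
    fun v a h => (hbasis.2 v (mem_top_span e hfull v)).2 a h
  have hc0 : c 0 = 0 := by
    have h0 : Tendsto (fun m => ∑ k ∈ Finset.range m, (0:ℝ) • e k) atTop (𝓝 (0:E)) := by
      simp only [zero_smul, Finset.sum_const_zero]
      exact tendsto_const_nhds
    exact (huniq 0 (fun _ => (0:ℝ)) h0).symm
  haveI : CompleteSpace ↥(SSmod e) := (isClosed_SSmod e hb hlow).completeSpace_coe
  have hker : (Phi e).ker = ⊥ := by
    rw [LinearMap.ker_eq_bot']
    intro F hF0
    obtain ⟨aa, haa⟩ := F.2.1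
    have hlim0 : Tendsto (fun m => ∑ k ∈ Finset.range m, aa k • e k) atTop (𝓝 (0:E)) := by
      have h := Phi_tendsto e F
      have hPhi : PhiFun e F = 0 := hF0
      rw [hPhi] at h
      have heq : (fun m => (F : BoundedContinuousFunction ℕ E) m)
          = fun m => ∑ k ∈ Finset.range m, aa k • e k := funext haa
      rwa [heq] at h
    have haac : aa = c 0 := huniq 0 aa hlim0
    have haa0 : aa = 0 := by rw [haac, hc0]
    apply Subtype.ext
    apply BoundedContinuousFunction.ext
    intro m
    rw [haa m, haa0]
    simp
  have hrange : (Phi e).range = ⊤ := by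
    rw [LinearMap.range_eq_top]
    intro v
    have hcv := hexp v
    obtain ⟨R, hR0, hR⟩ := cauchySeq_bdd hcv.cauchySeq
    refine ⟨⟨⟨⟨fun m => ∑ k ∈ Finset.range m, c v k • e k, continuous_of_discreteTopology⟩,
      ⟨R, fun x y => le_of_lt (hR x y)⟩⟩, ⟨c v, fun m => rfl⟩, ⟨v, hcv⟩⟩, ?_⟩
    exact tendsto_nhds_unique (Phi_tendsto e _) hcv
  let equiv := ContinuousLinearEquiv.ofBijective (Phi e) hker hrange
  set Psi : E →L[ℝ] ↥(SSmod e) := (equiv.symm : E →L[ℝ] ↥(SSmod e)) with hPsi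
  refine ⟨max 1 ‖Psi‖, le_max_left _ _, fun v m => ?_⟩
  set F : ↥(SSmod e) := equiv.symm v with hF
  have hPhiF : Phi e F = v := by
    have h1 : equiv F = v := equiv.apply_symm_apply v
    rwa [show (equiv F : E) = Phi e F from rfl] at h1
  obtain ⟨aa, haa⟩ := F.2.1
  have hlimF : Tendsto (fun m => ∑ k ∈ Finset.range m, aa k • e k) atTop (𝓝 v) := by
    have h := Phi_tendsto e F
    have heq : (fun m => (F : BoundedContinuousFunction ℕ E) m)
        = fun m => ∑ k ∈ Finset.range m, aa k • e k := funext haa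
    rw [heq] at h
    rwa [show PhiFun e F = v from hPhiF] at h
  have haac : aa = c v := huniq v aa hlimF
  have hFm : (F : BoundedContinuousFunction ℕ E) m = ∑ k ∈ Finset.range m, c v k • e k := by
    rw [haa m, haac]
  calc ‖∑ k ∈ Finset.range m, c v k • e k‖
      = ‖(F : BoundedContinuousFunction ℕ E) m‖ := by rw [hFm]
  _ ≤ ‖(F : BoundedContinuousFunction ℕ E)‖ :=
      BoundedContinuousFunction.norm_coe_le_norm _ m
  _ = ‖F‖ := rfl
  _ = ‖Psi v‖ := rfl
  _ ≤ ‖Psi‖ * ‖v‖ := Psi.le_opNorm v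
  _ ≤ (max 1 ‖Psi‖) * ‖v‖ := mul_le_mul_of_nonneg_right (le_max_right _ _) (norm_nonneg v)

end BasisBound

section Signs

/-- `±1` sign attached to a boolean. -/
def sg (s : Bool) : ℝ := if s then 1 else -1

lemma abs_sg (s : Bool) : |sg s| = 1 := by cases s <;> simp [sg]

lemma sg_mul_self (s : Bool) : sg s * sg s = 1 := by cases s <;> simp [sg]

lemma sum_sg_orth {m : ℕ} (i j : Fin m) (hij : i ≠ j) :
    ∑ ε : Fin m → Bool, sg (ε i) * sg (ε j) = 0 := by
  classical
  refine Finset.sum_involution (fun ε _ => Function.update ε i (!(ε i))) ?_ ?_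
    (fun _ _ => Finset.mem_univ _) ?_
  · intro ε _
    show sg (ε i) * sg (ε j) + sg (Function.update ε i (!(ε i)) i) * sg (Function.update ε i (!(ε i)) j) = 0
    rw [Function.update_self, Function.update_of_ne (Ne.symm hij)]
    cases h : ε i <;> cases h2 : ε j <;> simp [sg, h, h2]
  · intro ε _ _
    intro hcon
    have h2 : Function.update ε i (!(ε i)) = ε := hcon
    have := congrFun h2 i
    rw [Function.update_self] at this
    cases h : ε i <;> rw [h] at this <;> simp at this
  · intro ε _
    show Function.update (Function.update ε i (!(ε i))) i (!(Function.update ε i (!(ε i)) i)) = ε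
    rw [Function.update_self, Function.update_idem, Bool.not_not, Function.update_eq_self]

lemma card_bool_fun (m : ℕ) : (Finset.univ : Finset (Fin m → Bool)).card = 2^m := by
  rw [Finset.card_univ, Fintype.card_fun]
  simp

lemma sum_sg_sq (m : ℕ) (t : Fin m → ℝ) :
    ∑ ε : Fin m → Bool, (∑ i, sg (ε i) * t i)^2 = 2^m * ∑ i, (t i)^2 := by
  classical
  have expand : ∀ ε : Fin m → Bool, (∑ i, sg (ε i) * t i)^2
      = ∑ i, ∑ j, (sg (ε i) * sg (ε j)) * (t i * t j) := by
    intro ε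
    rw [sq, Finset.sum_mul_sum]
    exact Finset.sum_congr rfl fun i _ => Finset.sum_congr rfl fun j _ => by ring
  simp only [expand]
  rw [Finset.sum_comm]
  have inner : ∀ i : Fin m, ∑ ε : Fin m → Bool, ∑ j, (sg (ε i) * sg (ε j)) * (t i * t j)
      = 2^m * (t i)^2 := by
    intro i
    rw [Finset.sum_comm]
    have hterm : ∀ j : Fin m, ∑ ε : Fin m → Bool, (sg (ε i) * sg (ε j)) * (t i * t j)
        = (∑ ε : Fin m → Bool, sg (ε i) * sg (ε j)) * (t i * t j) := by
      intro j
      rw [Finset.sum_mul]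
    simp only [hterm]
    rw [Finset.sum_eq_single i]
    · simp only [sg_mul_self]
      rw [Finset.sum_const, card_bool_fun]
      simp only [nsmul_eq_mul, Nat.cast_pow, Nat.cast_ofNat, one_mul, sq]
      ring
    · intro j _ hji
      rw [sum_sg_orth i j (Ne.symm hji), zero_mul]
    · intro hi
      exact absurd (Finset.mem_univ i) hi
  rw [Finset.sum_congr rfl fun i _ => inner i, ← Finset.mul_sum]

lemma sum_abs_sg_le (m : ℕ) (t : Fin m → ℝ) :
    ∑ ε : Fin m → Bool, |∑ i, sg (ε i) * t i| ≤ 2^m * Real.sqrt (∑ i, (t i)^2) := by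
  classical
  set S := ∑ ε : Fin m → Bool, |∑ i, sg (ε i) * t i| with hS
  have hS0 : 0 ≤ S := Finset.sum_nonneg fun _ _ => abs_nonneg _
  have hcs : S^2 ≤ 2^m * ∑ ε : Fin m → Bool, (∑ i, sg (ε i) * t i)^2 := by
    have h := Finset.sum_mul_sq_le_sq_mul_sq Finset.univ (fun _ : Fin m → Bool => (1:ℝ))
      (fun ε => |∑ i, sg (ε i) * t i|)
    simp only [one_mul, one_pow, sq_abs] at h
    calc S^2 ≤ (∑ _ε : Fin m → Bool, (1:ℝ)) * ∑ ε : Fin m → Bool, (∑ i, sg (ε i) * t i)^2 := h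
    _ = 2^m * ∑ ε : Fin m → Bool, (∑ i, sg (ε i) * t i)^2 := by
        rw [Finset.sum_const, card_bool_fun]; simp
  rw [sum_sg_sq] at hcs
  have htn : 0 ≤ ∑ i, (t i)^2 := Finset.sum_nonneg fun _ _ => sq_nonneg _
  have h2 : S^2 ≤ (2^m * Real.sqrt (∑ i, (t i)^2))^2 := by
    calc S^2 ≤ 2^m * (2^m * ∑ i, (t i)^2) := hcs
    _ = (2^m)^2 * ∑ i, (t i)^2 := by ring
    _ = (2^m * Real.sqrt (∑ i, (t i)^2))^2 := by
        rw [mul_pow, Real.sq_sqrt htn]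
  have hrhs : 0 ≤ 2^m * Real.sqrt (∑ i, (t i)^2) := by positivity
  calc S = Real.sqrt (S^2) := (Real.sqrt_sq hS0).symm
  _ ≤ Real.sqrt ((2^m * Real.sqrt (∑ i, (t i)^2))^2) := Real.sqrt_le_sqrt h2
  _ = 2^m * Real.sqrt (∑ i, (t i)^2) := Real.sqrt_sq hrhs

end Signs

section CoefLemmas
variable {E : Type*} [NormedAddCommGroup E] [NormedSpace ℝ E]
variable {e : ℕ → E} {c : E → ℕ → ℝ}

lemma huniq' (hbasis : IsBasicSeqN e c) (hfull : closedSpanN e = ⊤) (v : E) (a : ℕ → ℝ)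
    (h : Tendsto (fun m => ∑ k ∈ Finset.range m, a k • e k) atTop (𝓝 v)) : a = c v :=
  (hbasis.2 v (mem_top_span e hfull v)).2 a h

lemma hexp' (hbasis : IsBasicSeqN e c) (hfull : closedSpanN e = ⊤) (v : E) :
    Tendsto (fun m => ∑ k ∈ Finset.range m, c v k • e k) atTop (𝓝 v) :=
  (hbasis.2 v (mem_top_span e hfull v)).1

lemma c_add (hbasis : IsBasicSeqN e c) (hfull : closedSpanN e = ⊤) (u v : E) :
    c (u + v) = fun k => c u k + c v k := by
  refine (huniq' hbasis hfull (u + v) _ ?_).symm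
  have h := (hexp' hbasis hfull u).add (hexp' hbasis hfull v)
  have heq : (fun m => (∑ k ∈ Finset.range m, c u k • e k) + ∑ k ∈ Finset.range m, c v k • e k)
      = fun m => ∑ k ∈ Finset.range m, (c u k + c v k) • e k := by
    funext m
    rw [← Finset.sum_add_distrib]
    exact Finset.sum_congr rfl fun k _ => (add_smul _ _ _).symm
  rw [heq] at h
  exact h

lemma c_smul (hbasis : IsBasicSeqN e c) (hfull : closedSpanN e = ⊤) (r : ℝ) (v : E) :
    c (r • v) = fun k => r * c v k := by
  refine (huniq' hbasis hfull (r • v) _ ?_).symm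
  have h := (hexp' hbasis hfull v).const_smul r
  have heq : (fun m => r • ∑ k ∈ Finset.range m, c v k • e k)
      = fun m => ∑ k ∈ Finset.range m, (r * c v k) • e k := by
    funext m
    rw [Finset.smul_sum]
    exact Finset.sum_congr rfl fun k _ => smul_smul r (c v k) (e k)
  rw [heq] at h
  exact h

lemma c_basis (hbasis : IsBasicSeqN e c) (hfull : closedSpanN e = ⊤) (i : ℕ) :
    c (e i) = fun k => if k = i then 1 else 0 := by
  refine (huniq' hbasis hfull (e i) _ ?_).symm
  refine tendsto_atTop_of_eventually_const (i₀ := i + 1) fun m hm => ?_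
  have : ∀ k ∈ Finset.range m, (if k = i then (1:ℝ) else 0) • e k
      = if k = i then e k else 0 := by
    intro k _
    split <;> simp
  rw [Finset.sum_congr rfl this, Finset.sum_ite_eq' (Finset.range m) i (fun k => e k),
    if_pos (Finset.mem_range.mpr hm)]

lemma c_finsum (hbasis : IsBasicSeqN e c) (hfull : closedSpanN e = ⊤) (m : ℕ) (d : ℕ → ℝ) :
    c (∑ k ∈ Finset.range m, d k • e k) = fun k => if k < m then d k else 0 := by
  refine (huniq' hbasis hfull _ _ ?_).symm
  refine tendsto_atTop_of_eventually_const (i₀ := m) fun M hM => ?_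
  have h1 : ∀ k ∈ Finset.range M, (if k < m then d k else 0) • e k
      = if k < m then d k • e k else 0 := by
    intro k _
    split <;> simp
  rw [Finset.sum_congr rfl h1]
  have hsub : Finset.range m ⊆ Finset.range M := Finset.range_subset_range.mpr hM
  rw [← Finset.sum_subset hsub (fun k _ hk => by rw [if_neg (by simpa using hk)])]
  exact Finset.sum_congr rfl fun k hk => by rw [if_pos (Finset.mem_range.mp hk)]

end CoefLemmas
end Stmt12Proof

open Stmt12Proof

set_option maxHeartbeats 3200000

/-- A semi-normalized Schauder basis of a Banach space which is not
equivalent to the unit vector basis of `ℓ_1` embeds into some Banach lattice as a basic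
sequence which is not absolute.  (Recall that `Σ a_i` of multiples of the `ℓ_1` unit vector
basis converges iff `Σ |a_i| < ∞`.) -/
theorem stmt12 (E : Type*) [NormedAddCommGroup E] [NormedSpace ℝ E] [CompleteSpace E]
    (e : ℕ → E) (c : E → ℕ → ℝ)
    (hbasis : IsBasicSeqN e c) (hfull : closedSpanN e = ⊤) (hsn : SemiNormalizedN e)
    (hnotl1 : ¬ ∀ a : ℕ → ℝ,
      (∃ s, Tendsto (fun m => ∑ i ∈ Finset.range m, a i • e i) atTop (𝓝 s)) ↔
        Summable fun i => |a i|) :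
    ∃ (X : Type) (i₁ : NormedLatticeAddCommGroup X) (i₂ : _) (i₃ : _) (i₄ : _),
      @Stmt12Witness E _ _ e X i₁ i₂ i₃ i₄ := by
  classical
  obtain ⟨bb, BB, hbb, hsnb⟩ := hsn
  have hBB0 : 0 < BB := lt_of_lt_of_le hbb ((hsnb 0).1.trans (hsnb 0).2)
  -- extract the bad sequence
  obtain ⟨a, ha⟩ := not_forall.mp hnotl1
  rw [not_iff] at ha
  by_cases hsum : Summable (fun i => |a i|)
  · exfalso
    have hsv : Summable (fun i => a i • e i) := by
      refine Summable.of_norm_bounded (hsum.mul_right BB) fun i => ?_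
      rw [norm_smul, Real.norm_eq_abs]
      exact mul_le_mul_of_nonneg_left (hsnb i).2 (abs_nonneg _)
    exact (ha.mpr hsum) ⟨_, hsv.hasSum.tendsto_sum_nat⟩
  have hconv : ∃ s, Tendsto (fun m => ∑ i ∈ Finset.range m, a i • e i) atTop (𝓝 s) := by
    by_contra hnc
    exact hsum (ha.mp hnc)
  obtain ⟨sa, hsa⟩ := hconv
  -- basis constant
  obtain ⟨C, hC1, hC⟩ := Stmt12Proof.basis_bound e c hbasis hfull hbb (fun n => (hsnb n).1)
  have hC0 : 0 < C := lt_of_lt_of_le zero_lt_one hC1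
  have hc0 : c 0 = 0 := by
    refine (huniq' hbasis hfull 0 0 ?_).symm
    have : (fun m => ∑ k ∈ Finset.range m, (0:ℕ→ℝ) k • e k) = fun _ => (0:E) := by
      funext m; simp
    rw [this]
    exact tendsto_const_nhds
  -- coefficient bound
  set κ := 2 * C / bb with hκdef
  have hκ0 : 0 < κ := by positivity
  have hκ : ∀ (v : E) (k : ℕ), |c v k| ≤ κ * ‖v‖ := by
    intro v k
    have h1 : c v k • e k = (∑ j ∈ Finset.range (k+1), c v j • e j)
        - ∑ j ∈ Finset.range k, c v j • e j := by
      rw [Finset.sum_range_succ]; abel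
    have heq : |c v k| * ‖e k‖ = ‖c v k • e k‖ := by
      rw [norm_smul, Real.norm_eq_abs]
    have h2 : |c v k| * ‖e k‖ ≤ 2 * C * ‖v‖ := by
      rw [heq, h1]
      calc ‖(∑ j ∈ Finset.range (k+1), c v j • e j) - ∑ j ∈ Finset.range k, c v j • e j‖
          ≤ ‖∑ j ∈ Finset.range (k+1), c v j • e j‖ + ‖∑ j ∈ Finset.range k, c v j • e j‖ :=
            norm_sub_le _ _
      _ ≤ C * ‖v‖ + C * ‖v‖ := add_le_add (hC v (k+1)) (hC v k)
      _ = 2 * C * ‖v‖ := by ring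
    have h3 : |c v k| * bb ≤ 2 * C * ‖v‖ :=
      le_trans (mul_le_mul_of_nonneg_left (hsnb k).1 (abs_nonneg _)) h2
    rw [hκdef, div_mul_eq_mul_div, le_div_iff₀ hbb]
    linarith
  -- dense rational combinations
  set dfun : RIdx → E := fun p => ∑ i : Fin p.1, ((p.2 i : ℝ)) • e (i : ℕ) with hdfun
  have hdense : ∀ (v : E) (δ : ℝ), 0 < δ → ∃ p, ‖dfun p - v‖ < δ := by
    intro v δ hδ
    obtain ⟨m, hm⟩ := (Metric.tendsto_atTop.mp (hexp' hbasis hfull v)) (δ/2) (by linarith)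
    have hm' : ‖(∑ k ∈ Finset.range m, c v k • e k) - v‖ < δ/2 := by
      have := hm m le_rfl
      rwa [dist_eq_norm] at this
    set η := δ / (2 * (m + 1) * (BB + 1)) with hη
    have hη0 : 0 < η := by positivity
    have hqex : ∀ i : Fin m, ∃ q : ℚ, |c v (i:ℕ) - (q:ℝ)| < η :=
      fun i => exists_rat_near _ hη0
    choose q hq using hqex
    refine ⟨⟨m, q⟩, ?_⟩
    have hfr : (∑ i : Fin m, c v (i:ℕ) • e (i:ℕ)) = ∑ k ∈ Finset.range m, c v k • e k :=
      Fin.sum_univ_eq_sum_range (fun k => c v k • e k) m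
    have hsplit : dfun ⟨m, q⟩ - v = (∑ i : Fin m, ((q i : ℝ) - c v (i:ℕ)) • e (i:ℕ))
        + ((∑ k ∈ Finset.range m, c v k • e k) - v) := by
      rw [← hfr]
      have hd : dfun ⟨m, q⟩ = ∑ i : Fin m, ((q i : ℝ)) • e (i : ℕ) := rfl
      rw [hd]
      simp only [sub_smul, Finset.sum_sub_distrib]
      abel
    have hterm : ∀ i : Fin m, ‖((q i : ℝ) - c v (i:ℕ)) • e (i:ℕ)‖ ≤ η * BB := by
      intro i
      rw [norm_smul, Real.norm_eq_abs]
      have h1 : |(q i : ℝ) - c v (i:ℕ)| ≤ η := by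
        rw [abs_sub_comm]
        exact le_of_lt (hq i)
      exact mul_le_mul h1 (hsnb (i:ℕ)).2 (norm_nonneg _) (le_of_lt hη0)
    have hsum1 : ‖∑ i : Fin m, ((q i : ℝ) - c v (i:ℕ)) • e (i:ℕ)‖ ≤ m * (η * BB) := by
      calc ‖∑ i : Fin m, ((q i : ℝ) - c v (i:ℕ)) • e (i:ℕ)‖
          ≤ ∑ _i : Fin m, (η * BB) := norm_sum_le_of_le _ fun i _ => hterm i
      _ = m * (η * BB) := by rw [Finset.sum_const, Finset.card_univ, Fintype.card_fin]; simp
    have hlt : (m:ℝ) * (η * BB) < δ/2 := by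
      have hD : (0:ℝ) < 2*((m:ℝ)+1)*(BB+1) := by positivity
      have heq2 : (m:ℝ) * (η * BB) = ((m:ℝ)*BB) * δ / (2*((m:ℝ)+1)*(BB+1)) := by
        rw [hη]; ring
      rw [heq2, div_lt_iff₀ hD]
      have hmB : (m:ℝ)*BB < ((m:ℝ)+1)*(BB+1) := by
        nlinarith [Nat.cast_nonneg (α := ℝ) m]
      nlinarith [hδ, Nat.cast_nonneg (α := ℝ) m]
    calc ‖dfun ⟨m, q⟩ - v‖
        ≤ ‖∑ i : Fin m, ((q i : ℝ) - c v (i:ℕ)) • e (i:ℕ)‖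
          + ‖(∑ k ∈ Finset.range m, c v k • e k) - v‖ := by rw [hsplit]; exact norm_add_le _ _
    _ < δ/2 + δ/2 := add_lt_add_of_le_of_lt (le_trans hsum1 (le_of_lt hlt)) hm'
    _ = δ := by ring
  -- norming functionals
  set g : RIdx → (E →L[ℝ] ℝ) := fun p =>
    if h : dfun p ≠ 0 then Classical.choose (exists_dual_vector ℝ (dfun p) (norm_ne_zero_iff.mpr h)) else 0 with hgdef
  have hgval : ∀ p, dfun p ≠ 0 → ‖g p‖ = 1 ∧ g p (dfun p) = ‖dfun p‖ := by
    intro p h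
    have hspec := Classical.choose_spec (exists_dual_vector ℝ (dfun p) (norm_ne_zero_iff.mpr h))
    constructor
    · simp only [hgdef]; rw [dif_pos h]; exact hspec.1
    · simp only [hgdef]; rw [dif_pos h]; exact_mod_cast hspec.2
  have hgle : ∀ p v, |g p v| ≤ ‖v‖ := by
    intro p v
    by_cases h : dfun p ≠ 0
    · calc |g p v| = ‖g p v‖ := (Real.norm_eq_abs _).symm
      _ ≤ ‖g p‖ * ‖v‖ := (g p).le_opNorm v
      _ = ‖v‖ := by rw [(hgval p h).1, one_mul]
    · simp only [hgdef, dif_neg h]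
      simp [norm_nonneg]
  have hgnorm : ∀ (v : E) (δ : ℝ), 0 < δ → ∃ p, ‖v‖ - δ ≤ |g p v| := by
    intro v δ hδ
    obtain ⟨p, hp⟩ := hdense v (δ/2) (by linarith)
    by_cases h : dfun p ≠ 0
    · refine ⟨p, ?_⟩
      obtain ⟨hn1, hval⟩ := hgval p h
      have h1 : |g p (dfun p)| - |g p v| ≤ ‖dfun p - v‖ := by
        calc |g p (dfun p)| - |g p v| ≤ |g p (dfun p) - g p v| := abs_sub_abs_le_abs_sub _ _
        _ = |g p (dfun p - v)| := by rw [map_sub]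
        _ ≤ ‖dfun p - v‖ := hgle p _
      have h2 : |g p (dfun p)| = ‖dfun p‖ := by rw [hval]; exact abs_of_nonneg (norm_nonneg _)
      have h3 : ‖v‖ - ‖dfun p - v‖ ≤ ‖dfun p‖ := by
        have := norm_sub_norm_le v (dfun p)
        have h4 : ‖v - dfun p‖ = ‖dfun p - v‖ := norm_sub_rev _ _
        linarith
      have h5 : ‖dfun p - v‖ < δ/2 := hp
      rw [h2] at h1
      linarith
    · refine ⟨p, ?_⟩
      rw [not_ne_iff] at h
      rw [h, zero_sub, norm_neg] at hp
      have := abs_nonneg (g p v)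
      linarith
  -- the quantities W m
  set Wset : ℕ → Set ℝ := fun m =>
    {r | ∃ d : ℕ → ℝ, ‖∑ k ∈ Finset.range m, d k • e k‖ ≤ 1
      ∧ r = Real.sqrt (∑ k ∈ Finset.range m, (d k)^2)} with hWsetdef
  set W : ℕ → ℝ := fun m => max 1 (sSup (Wset m)) with hWdef
  have hWne : ∀ m, (Wset m).Nonempty := by
    intro m
    refine ⟨0, 0, by simp, by simp⟩
  have hdk_eq : ∀ (m : ℕ) (d : ℕ → ℝ) (k : ℕ), k < m →
      c (∑ j ∈ Finset.range m, d j • e j) k = d k := by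
    intro m d k hk
    rw [c_finsum hbasis hfull m d]
    exact if_pos hk
  have hWmem_le : ∀ m r, r ∈ Wset m → r ≤ Real.sqrt (m * κ^2) := by
    rintro m r ⟨d, hd1, hd2⟩
    rw [hd2]
    refine Real.sqrt_le_sqrt ?_
    have hterm : ∀ k ∈ Finset.range m, (d k)^2 ≤ κ^2 := by
      intro k hk
      have h1 := hκ (∑ j ∈ Finset.range m, d j • e j) k
      rw [hdk_eq m d k (Finset.mem_range.mp hk)] at h1
      have h2 : |d k| ≤ κ := by
        refine le_trans h1 ?_
        calc κ * ‖∑ j ∈ Finset.range m, d j • e j‖ ≤ κ * 1 :=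
          mul_le_mul_of_nonneg_left hd1 (le_of_lt hκ0)
        _ = κ := mul_one κ
      calc (d k)^2 = |d k|^2 := (sq_abs _).symm
      _ ≤ κ^2 := pow_le_pow_left₀ (abs_nonneg _) h2 2
    calc ∑ k ∈ Finset.range m, (d k)^2 ≤ ∑ _k ∈ Finset.range m, κ^2 :=
      Finset.sum_le_sum hterm
    _ = m * κ^2 := by rw [Finset.sum_const, Finset.card_range, nsmul_eq_mul]
  have hWbddA : ∀ m, BddAbove (Wset m) := fun m =>
    ⟨Real.sqrt (m * κ^2), fun r hr => hWmem_le m r hr⟩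
  have hW1 : ∀ m, (1:ℝ) ≤ W m := fun m => le_max_left _ _
  have hW0 : ∀ m, (0:ℝ) < W m := fun m => lt_of_lt_of_le zero_lt_one (hW1 m)
  have hWd : ∀ (m : ℕ) (d : ℕ → ℝ), Real.sqrt (∑ k ∈ Finset.range m, (d k)^2)
      ≤ W m * ‖∑ k ∈ Finset.range m, d k • e k‖ := by
    intro m d
    rcases eq_or_lt_of_le (norm_nonneg (∑ k ∈ Finset.range m, d k • e k)) with ht | ht
    · have hu0 : (∑ k ∈ Finset.range m, d k • e k) = 0 := by
        rw [← norm_eq_zero]; exact ht.symm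
      have hd0 : ∀ k ∈ Finset.range m, (d k)^2 = 0 := by
        intro k hk
        have h1 := hdk_eq m d k (Finset.mem_range.mp hk)
        rw [hu0, hc0] at h1
        simp only [Pi.zero_apply] at h1
        rw [← h1]
        simp
      rw [Finset.sum_eq_zero hd0, Real.sqrt_zero, ← ht, mul_zero]
    · set t := ‖∑ k ∈ Finset.range m, d k • e k‖ with htdef
      have htne : t ≠ 0 := ne_of_gt ht
      have hmem : Real.sqrt (∑ k ∈ Finset.range m, (d k)^2) / t ∈ Wset m := by
        refine ⟨fun k => d k / t, ?_, ?_⟩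
        · have : (∑ k ∈ Finset.range m, (d k / t) • e k)
              = t⁻¹ • ∑ k ∈ Finset.range m, d k • e k := by
            rw [Finset.smul_sum]
            refine Finset.sum_congr rfl fun k _ => ?_
            rw [smul_smul, inv_mul_eq_div]
          rw [this, norm_smul, norm_inv, Real.norm_eq_abs, abs_of_pos ht, ← htdef,
            inv_mul_cancel₀ htne]
        · have : ∀ k ∈ Finset.range m, (d k / t)^2 = (d k)^2 * (t^2)⁻¹ := by
            intro k _
            rw [div_pow]
            rw [div_eq_mul_inv]
          rw [Finset.sum_congr rfl this, ← Finset.sum_mul, Real.sqrt_mul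
            (Finset.sum_nonneg fun k _ => sq_nonneg _), Real.sqrt_inv, Real.sqrt_sq (le_of_lt ht)]
          rw [div_eq_mul_inv]
      have h2 : Real.sqrt (∑ k ∈ Finset.range m, (d k)^2) / t ≤ W m := by
        refine le_trans (le_csSup (hWbddA m) hmem) (le_max_right _ _)
      rw [div_le_iff₀ ht] at h2
      exact h2
  have hWv : ∀ (v : E) (m : ℕ), Real.sqrt (∑ k ∈ Finset.range m, (c v k)^2)
      ≤ W m * (C * ‖v‖) := by
    intro v m
    refine le_trans (hWd m (c v)) ?_
    exact mul_le_mul_of_nonneg_left (hC v m) (le_of_lt (hW0 m))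
  -- the embedding T
  set Tf : E → Om → ℝ := fun v => Sum.elim (fun p => g p v)
    (fun q : BIdx => (2^q.1 * W q.1)⁻¹ * ∑ i : Fin q.1, sg (q.2 i) * c v (i:ℕ)) with hTfdef
  have hTfinl : ∀ v p, Tf v (Sum.inl p) = g p v := fun v p => rfl
  have hTfinr : ∀ v (q : BIdx), Tf v (Sum.inr q)
      = (2^q.1 * W q.1)⁻¹ * ∑ i : Fin q.1, sg (q.2 i) * c v (i:ℕ) := fun v q => rfl
  have h2W0 : ∀ m : ℕ, (0:ℝ) < 2^m * W m := by
    intro m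
    have := hW0 m
    positivity
  have hQTf_inl : ∀ v p, Qv (Tf v) (Sum.inl p) = |g p v| := fun v p => rfl
  have hQTf_inr : ∀ v m, Qv (Tf v) (Sum.inr m)
      = (2^m * W m)⁻¹ * ∑ ε : Fin m → Bool, |∑ i : Fin m, sg (ε i) * c v (i:ℕ)| := by
    intro v m
    show (∑ ε : Fin m → Bool, |Tf v (Sum.inr ⟨m, ε⟩)|) = _
    rw [Finset.mul_sum]
    refine Finset.sum_congr rfl fun ε _ => ?_
    rw [hTfinr, abs_mul, abs_of_nonneg (inv_nonneg.mpr (le_of_lt (h2W0 m)))]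
  have hQTf_inr_le : ∀ v m, Qv (Tf v) (Sum.inr m) ≤ C * ‖v‖ := by
    intro v m
    rw [hQTf_inr]
    have h1 := sum_abs_sg_le m (fun i => c v (i:ℕ))
    have h2 : Real.sqrt (∑ i : Fin m, (c v (i:ℕ))^2) ≤ W m * (C * ‖v‖) := by
      rw [Fin.sum_univ_eq_sum_range (fun k => (c v k)^2) m]
      exact hWv v m
    have h2m : (0:ℝ) < 2^m := by positivity
    have hWm0 := hW0 m
    calc (2^m * W m)⁻¹ * ∑ ε : Fin m → Bool, |∑ i : Fin m, sg (ε i) * c v (i:ℕ)|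
        ≤ (2^m * W m)⁻¹ * (2^m * (W m * (C * ‖v‖))) := by
          refine mul_le_mul_of_nonneg_left ?_ (inv_nonneg.mpr (le_of_lt (h2W0 m)))
          exact le_trans h1 (mul_le_mul_of_nonneg_left h2 (le_of_lt h2m))
    _ = C * ‖v‖ := by
        field_simp
  have hmemT : ∀ v, MemX (Tf v) := by
    intro v
    refine ⟨max ‖v‖ (C * ‖v‖), fun j => ?_⟩
    cases j with
    | inl p => exact le_trans (le_of_eq (hQTf_inl v p)) (le_trans (hgle p v) (le_max_left _ _))
    | inr m => exact le_trans (hQTf_inr_le v m) (le_max_right _ _)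
  set Tlin : E →ₗ[ℝ] Xsp :=
    { toFun := fun v => ⟨Tf v, hmemT v⟩
      map_add' := by
        intro u v
        refine Xsp.ext' (funext fun ω => ?_)
        show Tf (u + v) ω = Tf u ω + Tf v ω
        cases ω with
        | inl p => rw [hTfinl, hTfinl, hTfinl, map_add]
        | inr q =>
          have hcc : ∀ i : Fin q.1, sg (q.2 i) * c (u + v) (i:ℕ)
              = sg (q.2 i) * c u (i:ℕ) + sg (q.2 i) * c v (i:ℕ) := by
            intro i
            rw [c_add hbasis hfull u v]
            ring
          rw [hTfinr, hTfinr, hTfinr, Finset.sum_congr rfl (fun i _ => hcc i),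
            Finset.sum_add_distrib]
          ring
      map_smul' := by
        intro r v
        refine Xsp.ext' (funext fun ω => ?_)
        show Tf (r • v) ω = r * Tf v ω
        cases ω with
        | inl p => rw [hTfinl, hTfinl, map_smul]; rfl
        | inr q =>
          have hcc : ∀ i : Fin q.1, sg (q.2 i) * c (r • v) (i:ℕ)
              = r * (sg (q.2 i) * c v (i:ℕ)) := by
            intro i
            rw [c_smul hbasis hfull r v]
            ring
          rw [hTfinr, hTfinr, Finset.sum_congr rfl (fun i _ => hcc i), ← Finset.mul_sum]
          ring } with hTlindef
  have hTlin_apply : ∀ v, Xsp.xv (Tlin v) = Tf v := fun v => rfl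
  have hTnorm_le : ∀ v : E, ‖Tlin v‖ ≤ C * ‖v‖ := by
    intro v
    refine Xsp.norm_le' fun j => ?_
    cases j with
    | inl p =>
      refine le_trans (le_of_eq (hQTf_inl v p)) (le_trans (hgle p v) ?_)
      exact le_mul_of_one_le_left (norm_nonneg v) hC1
    | inr m => exact hQTf_inr_le v m
  set T : E →L[ℝ] Xsp := LinearMap.mkContinuous Tlin C (fun v => hTnorm_le v) with hTdef
  have hT_apply : ∀ v, Xsp.xv (T v) = Tf v := fun v => rfl
  have hT_norm_le : ∀ v, ‖T v‖ ≤ C * ‖v‖ := hTnorm_le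
  have hT_lower : ∀ v, ‖v‖ ≤ ‖T v‖ := by
    intro v
    refine le_of_forall_pos_le_add fun δ hδ => ?_
    obtain ⟨p, hp⟩ := hgnorm v δ hδ
    have h1 : |g p v| ≤ ‖T v‖ := by
      refine le_trans (le_of_eq (hQTf_inl v p).symm) ?_
      exact le_trans (le_of_eq (congrArg (fun z => Qv z (Sum.inl p)) (hT_apply v).symm))
        (Xsp.Qv_le_norm (T v) (Sum.inl p))
    linarith
  have hT_inj : Function.Injective T := by
    intro u v huv
    have h1 : ‖u - v‖ ≤ ‖T (u - v)‖ := hT_lower _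
    rw [map_sub, huv, sub_self, norm_zero] at h1
    have := norm_nonneg (u - v)
    have h2 : ‖u - v‖ = 0 := le_antisymm h1 this
    rwa [norm_sub_eq_zero_iff] at h2
  -- partial sum transfer
  have hTpartial : ∀ (bv : ℕ → ℝ) (m : ℕ),
      (∑ i ∈ Finset.range m, bv i • T (e i)) = T (∑ i ∈ Finset.range m, bv i • e i) := by
    intro bv m
    rw [map_sum]
    exact Finset.sum_congr rfl fun i _ => (map_smul T (bv i) (e i)).symm
  have hCauchyRefl : ∀ (z : ℕ → E), CauchySeq (fun m => T (z m)) → CauchySeq z := by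
    intro z hz
    rw [Metric.cauchySeq_iff] at hz ⊢
    intro ε hε
    obtain ⟨N, hN⟩ := hz ε hε
    refine ⟨N, fun m hm n hn => ?_⟩
    have h1 := hN m hm n hn
    rw [dist_eq_norm] at h1 ⊢
    refine lt_of_le_of_lt ?_ h1
    calc ‖z m - z n‖ ≤ ‖T (z m - z n)‖ := hT_lower _
    _ = ‖T (z m) - T (z n)‖ := by rw [map_sub]
  have hEquiv : EquivSeq e (fun i => T (e i)) := by
    intro bv
    constructor
    · rintro ⟨s, hs⟩
      refine ⟨T s, ?_⟩
      have : (fun m => ∑ i ∈ Finset.range m, bv i • T (e i))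
          = fun m => T (∑ i ∈ Finset.range m, bv i • e i) := funext fun m => hTpartial bv m
      rw [this]
      exact (T.continuous.tendsto s).comp hs
    · rintro ⟨t, ht⟩
      have h1 : (fun m => ∑ i ∈ Finset.range m, bv i • T (e i))
          = fun m => T (∑ i ∈ Finset.range m, bv i • e i) := funext fun m => hTpartial bv m
      rw [h1] at ht
      have h2 : CauchySeq (fun m => ∑ i ∈ Finset.range m, bv i • e i) :=
        hCauchyRefl _ ht.cauchySeq
      exact cauchySeq_tendsto_of_complete h2
  -- every element of the closed span of the image is in the range of T
  have hrangeT : ∀ y ∈ closedSpanN (fun i => T (e i)), ∃ v, T v = y := by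
    intro y hy
    have hy2 : y ∈ closure ((Submodule.span ℝ (Set.range (fun i => T (e i)))) :
        Set Xsp) := by
      rw [← Submodule.topologicalClosure_coe]
      exact hy
    obtain ⟨z, hzmem, hzlim⟩ := mem_closure_iff_seq_limit.mp hy2
    have hspanle : Submodule.span ℝ (Set.range (fun i => T (e i)))
        ≤ LinearMap.range (T : E →ₗ[ℝ] Xsp) := by
      rw [Submodule.span_le]
      rintro _ ⟨i, rfl⟩
      exact ⟨e i, rfl⟩
    have hzv : ∀ n, ∃ v, T v = z n := fun n => hspanle (hzmem n)
    choose v hv using hzv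
    have hTv : (fun n => T (v n)) = z := funext hv
    have hvC : CauchySeq v := by
      refine hCauchyRefl v ?_
      rw [hTv]
      exact hzlim.cauchySeq
    obtain ⟨w, hw⟩ := cauchySeq_tendsto_of_complete hvC
    refine ⟨w, ?_⟩
    have h3 : Tendsto (fun n => T (v n)) atTop (𝓝 (T w)) := (T.continuous.tendsto w).comp hw
    rw [hTv] at h3
    exact tendsto_nhds_unique h3 hzlim
  -- coefficient functionals on X
  set c' : Xsp → ℕ → ℝ := fun y => if h : ∃ v, T v = y then c (Classical.choose h) else 0
    with hc'def
  have hc'T : ∀ v, c' (T v) = c v := by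
    intro v
    have h : ∃ u, T u = T v := ⟨v, rfl⟩
    simp only [hc'def, dif_pos h]
    rw [hT_inj (Classical.choose_spec h)]
  -- block coordinates of the basis images
  have hxcoord : ∀ (i m : ℕ) (hi : i < m) (ε : Fin m → Bool),
      Xsp.xv (T (e i)) (Sum.inr ⟨m, ε⟩) = (2^m * W m)⁻¹ * sg (ε ⟨i, hi⟩) := by
    intro i m hi ε
    have h0 : Xsp.xv (T (e i)) (Sum.inr ⟨m, ε⟩) = Tf (e i) (Sum.inr ⟨m, ε⟩) := rfl
    rw [h0, hTfinr]
    congr 1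
    have hterm : ∀ j : Fin m, j ≠ ⟨i, hi⟩ → sg (ε j) * c (e i) (j:ℕ) = 0 := by
      intro j hj
      have hji : (j:ℕ) ≠ i := by
        intro hcon
        exact hj (Fin.ext hcon)
      have hcb : c (e i) (j:ℕ) = if (j:ℕ) = i then 1 else 0 := by
        rw [c_basis hbasis hfull i]
      rw [hcb, if_neg hji, mul_zero]
    rw [Finset.sum_eq_single (⟨i, hi⟩ : Fin m) (fun j _ hj => hterm j hj)
      (fun hmem => absurd (Finset.mem_univ _) hmem)]
    have hcb : c (e i) ((⟨i, hi⟩ : Fin m) : ℕ) = 1 := by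
      rw [c_basis hbasis hfull i]
      simp
    rw [hcb, mul_one]
  -- the ℓ¹-block payoff
  have hpayoff : ∀ (bv : ℕ → ℝ) (m : ℕ),
      (∑ i ∈ Finset.range m, |bv i|) ≤ W m * ‖∑ i ∈ Finset.range m, |bv i • T (e i)|‖ := by
    intro bv m
    set S : Xsp := ∑ i ∈ Finset.range m, |bv i • T (e i)| with hSdef
    have hcoordS : ∀ ε : Fin m → Bool, Xsp.xv S (Sum.inr ⟨m, ε⟩)
        = ∑ i ∈ Finset.range m, |bv i| * (2^m * W m)⁻¹ := by
      intro ε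
      rw [hSdef, Xsp.xv_sum]
      refine Finset.sum_congr rfl fun i hi => ?_
      rw [Xsp.xv_abs]
      have h1 : Xsp.xv (bv i • T (e i)) (Sum.inr ⟨m, ε⟩)
          = bv i * Xsp.xv (T (e i)) (Sum.inr ⟨m, ε⟩) := rfl
      rw [h1, hxcoord i m (Finset.mem_range.mp hi) ε, abs_mul, abs_mul, abs_sg,
        abs_of_nonneg (inv_nonneg.mpr (le_of_lt (h2W0 m)))]
      ring
    have hval : ∀ ε : Fin m → Bool, |Xsp.xv S (Sum.inr ⟨m, ε⟩)|
        = (∑ i ∈ Finset.range m, |bv i|) * (2^m * W m)⁻¹ := by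
      intro ε
      rw [hcoordS ε, ← Finset.sum_mul]
      refine abs_of_nonneg ?_
      have h2 := h2W0 m
      positivity
    have hQS : Qv (Xsp.xv S) (Sum.inr m) = (∑ i ∈ Finset.range m, |bv i|) * (W m)⁻¹ := by
      have hshow : Qv (Xsp.xv S) (Sum.inr m)
          = ∑ ε : Fin m → Bool, |Xsp.xv S (Sum.inr ⟨m, ε⟩)| := rfl
      rw [hshow, Finset.sum_congr rfl fun ε _ => hval ε, Finset.sum_const, card_bool_fun,
        nsmul_eq_mul]
      have h2m : ((2:ℝ))^m ≠ 0 := by positivity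
      have hWm : W m ≠ 0 := ne_of_gt (hW0 m)
      push_cast
      rw [mul_inv]
      field_simp
    have hle := Xsp.Qv_le_norm S (Sum.inr m)
    rw [hQS] at hle
    rw [← div_eq_mul_inv, div_le_iff₀ (hW0 m)] at hle
    calc (∑ i ∈ Finset.range m, |bv i|) ≤ ‖S‖ * W m := hle
    _ = W m * ‖S‖ := mul_comm _ _
  -- non-absoluteness
  have hNotAbs : ¬ AbsoluteSeq (fun i => T (e i)) := by
    rintro ⟨A, hA⟩
    set A' := max A 1 with hA'def
    have hA'1 : (1:ℝ) ≤ A' := le_max_right _ _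
    have hA'0 : (0:ℝ) < A' := lt_of_lt_of_le zero_lt_one hA'1
    have hA' : ∀ (m : ℕ) (bv : ℕ → ℝ), ‖∑ i ∈ Finset.range m, |bv i • T (e i)|‖
        ≤ A' * ‖∑ i ∈ Finset.range m, bv i • T (e i)‖ :=
      fun m bv => le_trans (hA m bv)
        (mul_le_mul_of_nonneg_right (le_max_left _ _) (norm_nonneg _))
    have hmaster : ∀ (m : ℕ) (bv : ℕ → ℝ),
        (∑ i ∈ Finset.range m, |bv i|)
          ≤ W m * (A' * (C * ‖∑ i ∈ Finset.range m, bv i • e i‖)) := by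
      intro m bv
      refine le_trans (hpayoff bv m) ?_
      refine mul_le_mul_of_nonneg_left ?_ (le_of_lt (hW0 m))
      refine le_trans (hA' m bv) ?_
      refine mul_le_mul_of_nonneg_left ?_ (le_of_lt hA'0)
      rw [hTpartial bv m]
      exact hT_norm_le _
    have hWb : ∀ m, W m ≤ max 1 (κ * A' * C) := by
      intro m
      have hsup : sSup (Wset m) ≤ Real.sqrt ((κ * A' * C) * W m) := by
        refine csSup_le (hWne m) ?_
        rintro r ⟨d, hd1, hd2⟩
        rw [hd2]
        refine Real.sqrt_le_sqrt ?_
        have hd2' : ∀ k ∈ Finset.range m, (d k)^2 ≤ κ * |d k| := by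
          intro k hk
          have h1 := hκ (∑ j ∈ Finset.range m, d j • e j) k
          rw [hdk_eq m d k (Finset.mem_range.mp hk)] at h1
          have h2 : |d k| ≤ κ := by
            refine le_trans h1 ?_
            calc κ * ‖∑ j ∈ Finset.range m, d j • e j‖ ≤ κ * 1 :=
              mul_le_mul_of_nonneg_left hd1 (le_of_lt hκ0)
            _ = κ := mul_one κ
          calc (d k)^2 = |d k| * |d k| := by rw [← sq_abs]; ring
          _ ≤ κ * |d k| := mul_le_mul_of_nonneg_right h2 (abs_nonneg _)
        have hsum2 : (∑ k ∈ Finset.range m, (d k)^2) ≤ κ * ∑ k ∈ Finset.range m, |d k| := by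
          rw [Finset.mul_sum]
          exact Finset.sum_le_sum hd2'
        have hsum3 : (∑ k ∈ Finset.range m, |d k|) ≤ W m * (A' * C) := by
          refine le_trans (hmaster m d) ?_
          have h5 : A' * (C * ‖∑ i ∈ Finset.range m, d i • e i‖) ≤ A' * C := by
            have h6 : C * ‖∑ i ∈ Finset.range m, d i • e i‖ ≤ C * 1 :=
              mul_le_mul_of_nonneg_left hd1 (le_of_lt hC0)
            calc A' * (C * ‖∑ i ∈ Finset.range m, d i • e i‖) ≤ A' * (C * 1) :=
              mul_le_mul_of_nonneg_left h6 (le_of_lt hA'0)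
            _ = A' * C := by ring
          exact mul_le_mul_of_nonneg_left h5 (le_of_lt (hW0 m))
        calc (∑ k ∈ Finset.range m, (d k)^2) ≤ κ * (W m * (A' * C)) :=
          le_trans hsum2 (mul_le_mul_of_nonneg_left hsum3 (le_of_lt hκ0))
        _ = (κ * A' * C) * W m := by ring
      have h5 : W m ≤ max 1 (Real.sqrt ((κ * A' * C) * W m)) := by
        have hshow : W m = max 1 (sSup (Wset m)) := rfl
        rw [hshow]
        exact max_le_max le_rfl hsup
      rcases le_max_iff.mp h5 with h6 | h6
      · exact le_trans h6 (le_max_left _ _)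
      · have hR0 : (0:ℝ) ≤ κ * A' * C := by positivity
        have h7 : (W m)^2 ≤ (κ * A' * C) * W m := by
          have h8 := Real.sq_sqrt (mul_nonneg hR0 (le_of_lt (hW0 m)))
          calc (W m)^2 ≤ (Real.sqrt ((κ * A' * C) * W m))^2 :=
            pow_le_pow_left₀ (le_of_lt (hW0 m)) h6 2
          _ = (κ * A' * C) * W m := h8
        have h9 : W m ≤ κ * A' * C := by nlinarith [hW0 m]
        exact le_trans h9 (le_max_right _ _)
    have hM : ∃ M : ℝ, ∀ m, ‖∑ i ∈ Finset.range m, a i • e i‖ ≤ M := by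
      obtain ⟨M, hMub⟩ := (hsa.norm).bddAbove_range
      exact ⟨M, fun m => hMub ⟨m, rfl⟩⟩
    obtain ⟨M, hMb⟩ := hM
    have hM0 : (0:ℝ) ≤ M := le_trans (norm_nonneg _) (hMb 0)
    have hfinal : ∀ m, (∑ i ∈ Finset.range m, |a i|)
        ≤ (max 1 (κ * A' * C)) * (A' * (C * M)) := by
      intro m
      refine le_trans (hmaster m a) ?_
      have h1 : A' * (C * ‖∑ i ∈ Finset.range m, a i • e i‖) ≤ A' * (C * M) := by
        refine mul_le_mul_of_nonneg_left ?_ (le_of_lt hA'0)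
        exact mul_le_mul_of_nonneg_left (hMb m) (le_of_lt hC0)
      have h2 : (0:ℝ) ≤ A' * (C * M) := by positivity
      calc W m * (A' * (C * ‖∑ i ∈ Finset.range m, a i • e i‖))
          ≤ W m * (A' * (C * M)) := mul_le_mul_of_nonneg_left h1 (le_of_lt (hW0 m))
      _ ≤ (max 1 (κ * A' * C)) * (A' * (C * M)) := mul_le_mul_of_nonneg_right (hWb m) h2
    exact hsum (summable_of_sum_range_le (fun i => abs_nonneg _) hfinal)
  -- assemble the witness
  refine ⟨Xsp, inferInstance, inferInstance, inferInstance, inferInstance,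
    (fun i => T (e i)), c', ?_, hEquiv, hNotAbs⟩
  constructor
  · intro n
    have h1 : 0 < ‖T (e n)‖ :=
      lt_of_lt_of_le (lt_of_lt_of_le hbb (hsnb n).1) (hT_lower (e n))
    intro h0
    have h0' : T (e n) = 0 := h0
    rw [h0', norm_zero] at h1
    exact lt_irrefl 0 h1
  · intro y hy
    obtain ⟨v, rfl⟩ := hrangeT y hy
    constructor
    · rw [hc'T v]
      have heq : (fun m => ∑ k ∈ Finset.range m, c v k • T (e k))
          = fun m => T (∑ k ∈ Finset.range m, c v k • e k) :=
        funext fun m => hTpartial (c v) m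
      rw [heq]
      exact (T.continuous.tendsto v).comp (hexp' hbasis hfull v)
    · intro aa haa
      have heq : (fun m => ∑ k ∈ Finset.range m, aa k • T (e k))
          = fun m => T (∑ k ∈ Finset.range m, aa k • e k) :=
        funext fun m => hTpartial aa m
      rw [heq] at haa
      have hz : CauchySeq (fun m => ∑ k ∈ Finset.range m, aa k • e k) :=
        hCauchyRefl _ haa.cauchySeq
      obtain ⟨w, hw⟩ := cauchySeq_tendsto_of_complete hz
      have hTw : T w = T v := by
        have h3 : Tendsto (fun m => T (∑ k ∈ Finset.range m, aa k • e k)) atTop (𝓝 (T w)) :=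
          (T.continuous.tendsto w).comp hw
        exact tendsto_nhds_unique h3 haa
      have hwv : w = v := hT_inj hTw
      rw [hc'T v]
      exact huniq' hbasis hfull v aa (hwv ▸ hw)
end

section
/- Suppose X and Y are Banach lattices, E is a subspace of X, and T: E → Y is a multibounded linear map which is bounded below (i.e. there is c > 0 with ‖Tx‖ ≥ c‖x‖ for all x ∈ E). If a sequence (x_k) ⊆ E is absolute in X, then (T x_k) is absolute in Y. -/
section Aux

variable {G : Type*} [Lattice G] [AddCommGroup G]
  [CovariantClass G G (· + ·) (· ≤ ·)] [CovariantClass G G (Function.swap (· + ·)) (· ≤ ·)]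

private lemma abs_sum_le' (s : Finset ℕ) (f : ℕ → G) :
    |∑ k ∈ s, f k| ≤ ∑ k ∈ s, |f k| := by
  classical
  induction s using Finset.cons_induction with
  | empty => simp
  | cons a t ha ih =>
    rw [Finset.sum_cons, Finset.sum_cons]
    exact (abs_add_le _ _).trans (add_le_add le_rfl ih)

/-- In a lattice-ordered group, the sum of absolute values is dominated by the supremum
of all signed sums. -/
private lemma sum_abs_le_sup_signed (y : ℕ → G) (s : Finset ℕ) :
    ∑ k ∈ s, |y k| ≤ s.powerset.sup' s.powerset_nonempty
      (fun σ => ∑ k ∈ s, if k ∈ σ then y k else -y k) := by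
  classical
  induction s using Finset.induction_on with
  | empty => simp
  | @insert a t ha ih =>
    rw [Finset.sum_insert ha]
    calc |y a| + ∑ k ∈ t, |y k|
        ≤ |y a| + t.powerset.sup' t.powerset_nonempty
            (fun σ => ∑ k ∈ t, if k ∈ σ then y k else -y k) := add_le_add le_rfl ih
      _ = t.powerset.sup' t.powerset_nonempty
            (fun σ => |y a| + ∑ k ∈ t, if k ∈ σ then y k else -y k) :=
          Finset.comp_sup'_eq_sup'_comp _ (fun z => |y a| + z) (fun u v => add_sup u v _)
      _ ≤ (insert a t).powerset.sup' (insert a t).powerset_nonempty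
            (fun σ => ∑ k ∈ insert a t, if k ∈ σ then y k else -y k) := by
          apply Finset.sup'_le
          intro σ hσ
          rw [Finset.mem_powerset] at hσ
          have haσ : a ∉ σ := fun h => ha (hσ h)
          have e1 : ∑ k ∈ insert a t, (if k ∈ insert a σ then y k else -y k)
              = y a + ∑ k ∈ t, (if k ∈ σ then y k else -y k) := by
            rw [Finset.sum_insert ha, if_pos (Finset.mem_insert_self a σ)]
            congr 1
            refine Finset.sum_congr rfl fun k hk => ?_
            have hk' : k ≠ a := fun h => ha (h ▸ hk)
            simp [Finset.mem_insert, hk']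
          have e2 : ∑ k ∈ insert a t, (if k ∈ σ then y k else -y k)
              = -y a + ∑ k ∈ t, (if k ∈ σ then y k else -y k) := by
            rw [Finset.sum_insert ha, if_neg haσ]
          have habs : |y a| = y a ⊔ -y a := rfl
          rw [habs, sup_add]
          apply sup_le
          · have h := Finset.le_sup'
              (fun σ => ∑ k ∈ insert a t, if k ∈ σ then y k else -y k)
              (Finset.mem_powerset.2 (Finset.insert_subset_insert a hσ))
            rw [e1] at h; exact h
          · have h := Finset.le_sup'
              (fun σ => ∑ k ∈ insert a t, if k ∈ σ then y k else -y k)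
              (Finset.mem_powerset.2 (hσ.trans (Finset.subset_insert a t)))
            rw [e2] at h; exact h

private lemma sup'_reindex {ι κ α : Type*} [SemilatticeSup α] [Fintype ι] [Fintype κ]
    [Nonempty ι] [Nonempty κ] (e : ι ≃ κ) (f : κ → α) :
    (Finset.univ.sup' Finset.univ_nonempty fun i => f (e i)) =
      Finset.univ.sup' Finset.univ_nonempty f := by
  apply le_antisymm
  · exact Finset.sup'_le _ _ fun i _ => Finset.le_sup' f (Finset.mem_univ (e i))
  · refine Finset.sup'_le _ _ fun k _ => ?_
    have := Finset.le_sup' (fun i => f (e i)) (Finset.mem_univ (e.symm k))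
    simpa using this

private lemma sup'_coe {α β : Type*} [SemilatticeSup β] (s : Finset α) (hs : s.Nonempty)
    (f : α → β) :
    haveI : Nonempty {x // x ∈ s} := hs.to_subtype
    (Finset.univ.sup' Finset.univ_nonempty fun i : {x // x ∈ s} => f i.1) = s.sup' hs f := by
  haveI : Nonempty {x // x ∈ s} := hs.to_subtype
  apply le_antisymm
  · exact Finset.sup'_le _ _ fun i _ => Finset.le_sup' f i.2
  · refine Finset.sup'_le _ _ fun b hb => ?_
    exact Finset.le_sup' (fun i : {x // x ∈ s} => f i.1) (Finset.mem_univ ⟨b, hb⟩)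

end Aux

/-- A multibounded linear map which is bounded below maps absolute
sequences to absolute sequences. -/
theorem stmt19 {X Y : Type*}
    [NormedAddCommGroup X] [Lattice X] [HasSolidNorm X] [IsOrderedAddMonoid X] [NormedSpace ℝ X] [PosSMulStrictMono ℝ X] [PosSMulReflectLT ℝ X] [CompleteSpace X]
    [NormedAddCommGroup Y] [Lattice Y] [HasSolidNorm Y] [IsOrderedAddMonoid Y] [NormedSpace ℝ Y] [PosSMulStrictMono ℝ Y] [PosSMulReflectLT ℝ Y] [CompleteSpace Y]
    (E : Submodule ℝ X) (T : ↥E →ₗ[ℝ] Y)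
    -- T is multibounded with constant M
    (M : ℝ) (hM1 : 1 ≤ M)
    (hmb : ∀ (m : ℕ) (v : Fin (m + 1) → ↥E),
      ‖Finset.univ.sup' Finset.univ_nonempty fun k => |T (v k)|‖ ≤
        M * ‖Finset.univ.sup' Finset.univ_nonempty fun k => |(v k : X)|‖)
    -- T is bounded below
    (cb : ℝ) (hcb : 0 < cb) (hlow : ∀ u : ↥E, cb * ‖u‖ ≤ ‖T u‖)
    -- (x_k) is a sequence in E which is absolute in X
    (x : ℕ → ↥E) (A : ℝ)
    (habs : ∀ (m : ℕ) (a : ℕ → ℝ),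
      ‖∑ k ∈ Finset.range m, |a k • (x k : X)|‖ ≤
        A * ‖∑ k ∈ Finset.range m, a k • (x k : X)‖) :
    -- then (T x_k) is absolute in Y
    ∃ A' : ℝ, ∀ (m : ℕ) (a : ℕ → ℝ),
      ‖∑ k ∈ Finset.range m, |a k • T (x k)|‖ ≤
        A' * ‖∑ k ∈ Finset.range m, a k • T (x k)‖ := by
  classical
  -- Multiboundedness over arbitrary nonempty fintypes
  have hmb' : ∀ (ι : Type) (_ : Fintype ι) (_ : Nonempty ι) (w : ι → E),
      ‖Finset.univ.sup' Finset.univ_nonempty fun i => |T (w i)|‖ ≤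
        M * ‖Finset.univ.sup' Finset.univ_nonempty fun i => |(w i : X)|‖ := by
    intro ι _ _ w
    obtain ⟨n, hn⟩ := Nat.exists_eq_succ_of_ne_zero (Fintype.card_ne_zero (α := ι))
    have e : Fin (n + 1) ≃ ι := (finCongr hn.symm).trans (Fintype.equivFin ι).symm
    have h := hmb n (fun i => w (e i))
    rwa [sup'_reindex e (fun i => |T (w i)|), sup'_reindex e (fun i => |(w i : X)|)] at h
  -- Multiboundedness over arbitrary nonempty finsets
  have hmb2 : ∀ {ι : Type} (s : Finset ι) (hs : s.Nonempty) (w : ι → E),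
      ‖s.sup' hs fun i => |T (w i)|‖ ≤ M * ‖s.sup' hs fun i => |(w i : X)|‖ := by
    intro ι s hs w
    haveI : Nonempty {x // x ∈ s} := hs.to_subtype
    have h := hmb' {x // x ∈ s} inferInstance inferInstance (fun i => w i.1)
    rwa [sup'_coe s hs (fun i => |T (w i)|), sup'_coe s hs (fun i => |(w i : X)|)] at h
  refine ⟨M * max A 0 / cb, ?_⟩
  intro m a
  set e : ℕ → E := fun k => a k • x k with he
  set u : E := ∑ k ∈ Finset.range m, e k with hu
  set pow := (Finset.range m).powerset with hpow
  have hpne : pow.Nonempty := (Finset.range m).powerset_nonempty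
  set v : Finset ℕ → E := fun σ => ∑ k ∈ Finset.range m, if k ∈ σ then e k else -e k with hv
  -- rewrite the goal in terms of T
  have hTe : ∀ k, a k • T (x k) = T (e k) := fun k => (map_smul T (a k) (x k)).symm
  have hTu : ∑ k ∈ Finset.range m, a k • T (x k) = T u := by
    rw [hu, map_sum]
    exact Finset.sum_congr rfl fun k _ => hTe k
  -- Step 1: sum of abs ≤ sup of signed sums in Y
  set SY := pow.sup' hpne (fun σ => |T (v σ)|) with hSY
  have hTv : ∀ σ, (∑ k ∈ Finset.range m, if k ∈ σ then T (e k) else -T (e k)) = T (v σ) := by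
    intro σ
    rw [hv, map_sum]
    refine Finset.sum_congr rfl fun k _ => ?_
    split_ifs <;> simp
  have h1 : ∑ k ∈ Finset.range m, |T (e k)| ≤ SY := by
    refine (sum_abs_le_sup_signed (fun k => T (e k)) (Finset.range m)).trans ?_
    apply Finset.sup'_le
    intro σ hσ
    rw [hTv σ]
    exact le_trans (le_abs_self _) (Finset.le_sup' (fun σ => |T (v σ)|) hσ)
  have h1n : (0:Y) ≤ ∑ k ∈ Finset.range m, |T (e k)| :=
    Finset.sum_nonneg fun k _ => abs_nonneg _
  have hSYn : (0:Y) ≤ SY := h1n.trans h1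
  have step1 : ‖∑ k ∈ Finset.range m, |T (e k)|‖ ≤ ‖SY‖ := by
    apply norm_le_norm_of_abs_le_abs
    rwa [abs_of_nonneg h1n, abs_of_nonneg hSYn]
  -- Step 2: multiboundedness
  set SX := pow.sup' hpne (fun σ => |((v σ : E) : X)|) with hSX
  have step2 : ‖SY‖ ≤ M * ‖SX‖ := hmb2 pow hpne v
  -- Step 3: SX ≤ sum of abs in X
  have hvX : ∀ σ, ((v σ : E) : X) = ∑ k ∈ Finset.range m, if k ∈ σ then (e k : X) else -(e k : X) := by
    intro σ
    rw [hv]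
    push_cast
    refine Finset.sum_congr rfl fun k _ => ?_
    split_ifs <;> simp
  have h3 : SX ≤ ∑ k ∈ Finset.range m, |a k • (x k : X)| := by
    apply Finset.sup'_le
    intro σ _
    rw [hvX σ]
    refine (abs_sum_le' _ _).trans ?_
    refine Finset.sum_le_sum fun k _ => ?_
    have : |if k ∈ σ then (e k : X) else -(e k : X)| = |(e k : X)| := by
      split_ifs <;> simp
    rw [this, he]
    simp
  have hSXn : (0:X) ≤ SX := by
    have hmem : (∅ : Finset ℕ) ∈ pow := Finset.mem_powerset.2 (Finset.empty_subset _)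
    exact le_trans (abs_nonneg _) (Finset.le_sup' (fun σ => |((v σ : E) : X)|) hmem)
  have hsumXn : (0:X) ≤ ∑ k ∈ Finset.range m, |a k • (x k : X)| :=
    Finset.sum_nonneg fun k _ => abs_nonneg _
  have step3 : ‖SX‖ ≤ ‖∑ k ∈ Finset.range m, |a k • (x k : X)|‖ := by
    apply norm_le_norm_of_abs_le_abs
    rwa [abs_of_nonneg hSXn, abs_of_nonneg hsumXn]
  -- Step 4: absoluteness of (x k) in X
  have hux : ∑ k ∈ Finset.range m, a k • (x k : X) = (u : X) := by
    rw [hu]; push_cast; rfl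
  have step4 : ‖∑ k ∈ Finset.range m, |a k • (x k : X)|‖ ≤ max A 0 * ‖(u : X)‖ := by
    refine (habs m a).trans ?_
    rw [hux]
    exact mul_le_mul_of_nonneg_right (le_max_left A 0) (norm_nonneg _)
  -- Step 5: bounded below
  have hnu : ‖(u : X)‖ = ‖u‖ := rfl
  have step5 : cb * ‖u‖ ≤ ‖T u‖ := hlow u
  -- Assemble
  have hgoal : ‖∑ k ∈ Finset.range m, |a k • T (x k)|‖ ≤ M * (max A 0 * ‖u‖) := by
    have : ∑ k ∈ Finset.range m, |a k • T (x k)| = ∑ k ∈ Finset.range m, |T (e k)| :=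
      Finset.sum_congr rfl fun k _ => by rw [hTe k]
    rw [this]
    calc ‖∑ k ∈ Finset.range m, |T (e k)|‖ ≤ ‖SY‖ := step1
      _ ≤ M * ‖SX‖ := step2
      _ ≤ M * ‖∑ k ∈ Finset.range m, |a k • (x k : X)|‖ :=
          mul_le_mul_of_nonneg_left step3 (le_trans zero_le_one hM1)
      _ ≤ M * (max A 0 * ‖(u : X)‖) :=
          mul_le_mul_of_nonneg_left step4 (le_trans zero_le_one hM1)
      _ = M * (max A 0 * ‖u‖) := by rw [hnu]
  rw [hTu]
  have hM0 : (0:ℝ) ≤ M := le_trans zero_le_one hM1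
  have hA0 : (0:ℝ) ≤ max A 0 := le_max_right A 0
  calc ‖∑ k ∈ Finset.range m, |a k • T (x k)|‖ ≤ M * (max A 0 * ‖u‖) := hgoal
    _ = M * max A 0 / cb * (cb * ‖u‖) := by field_simp
    _ ≤ M * max A 0 / cb * ‖T u‖ :=
        mul_le_mul_of_nonneg_left step5 (by positivity)
end
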